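/- arXiv:1903.03153 — 2 statements merged into one kernel-verified Lean document; each statement's English description precedes it below -/
import Mathlib

section
/- Combining the mixture-posterior identity with the strong law of large numbers: under the hypotheses of Lemma 1 (mixture prior π = (1−η₁)π₀ + η₁π₁, posterior density f(θ|y), marginal likelihoods m₀, m₁ > 0), if θ⁽¹⁾, θ⁽²⁾, … are i.i.d. draws from the posterior distribution, then ((1−η₁)/η₁)·p̂_N/(1−p̂_N) → m₁/m₀ almost surely, where p̂_N = (1/N)∑_{i=1}^N 1_{θ⁽ⁱ⁾ ∈ Θ₁}. -/
/-!
Since each component density vanishes off its own piece, the posterior puts mass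
`(1 - η₁) m₀ / Z` on `Θ₀` and `η₁ m₁ / Z` on `Θ₁`, where `Z = ∫ π f dμ`; so the posterior odds of
`Θ₁` are `η₁ m₁ / ((1 - η₁) m₀)`. By the strong law of large numbers `p̂_N` converges almost surely
to the posterior probability `p` of `Θ₁`, and `x ↦ x / (1 - x)` is continuous at `p < 1`.
-/

open MeasureTheory ProbabilityTheory Filter ENNReal Topology

section EmpiricalFrequency

variable {Ω α : Type*} [MeasurableSpace Ω] [MeasurableSpace α] {P : Measure Ω}
  [IsProbabilityMeasure P] {ν : Measure α} {X : ℕ → Ω → α}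

theorem ae_tendsto_empirical_frequency (hX : ∀ i, Measurable (X i))
    (hindep : Pairwise fun i j => IndepFun (X i) (X j) P) (hlaw : ∀ i, P.map (X i) = ν)
    {s : Set α} (hs : MeasurableSet s) :
    ∀ᵐ ω ∂P, Tendsto
      (fun N : ℕ => (N : ℝ)⁻¹ * ∑ i ∈ Finset.range N, s.indicator (fun _ => (1 : ℝ)) (X i ω))
      atTop (𝓝 (ν.real s)) := by
  set g : α → ℝ := s.indicator fun _ => 1
  have hg : Measurable g := measurable_const.indicator hs
  have hident : ∀ i, IdentDistrib (g ∘ X i) (g ∘ X 0) P P := fun i =>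
    IdentDistrib.comp ⟨(hX i).aemeasurable, (hX 0).aemeasurable, by rw [hlaw, hlaw]⟩ hg
  have hint : Integrable (g ∘ X 0) P :=
    .of_bound (hg.comp (hX 0)).aestronglyMeasurable 1 (.of_forall fun ω => by
      simp only [Function.comp_apply, g]
      exact (norm_indicator_le_norm_self _ _).trans (by simp))
  have hmean : P[g ∘ X 0] = ν.real s := by
    rw [Function.comp_def, ← integral_map (hX 0).aemeasurable hg.aestronglyMeasurable, hlaw 0,
      integral_indicator_const _ hs, smul_eq_mul, mul_one]
  have hslln := strong_law_ae_real (fun i => g ∘ X i) hint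
    (fun i j hij => (hindep hij).comp hg hg) hident
  rw [hmean] at hslln
  filter_upwards [hslln] with ω hω
  simpa [div_eq_inv_mul, g] using hω

end EmpiricalFrequency

section Posterior

variable {Θ : Type*} [MeasurableSpace Θ] {μ : Measure Θ}

theorem withDensity_div_lintegral_apply {F : Θ → ℝ≥0∞} (hF : ∫⁻ θ, F θ ∂μ ≠ 0)
    {s : Set Θ} (hs : MeasurableSet s) :
    μ.withDensity (fun θ => F θ / ∫⁻ θ', F θ' ∂μ) s = (∫⁻ θ in s, F θ ∂μ) / ∫⁻ θ, F θ ∂μ := by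
  simp only [withDensity_apply _ hs, div_eq_mul_inv]
  exact lintegral_mul_const' _ _ (ENNReal.inv_ne_top.mpr hF)

theorem isProbabilityMeasure_withDensity_div_lintegral {F : Θ → ℝ≥0∞}
    (hF₀ : ∫⁻ θ, F θ ∂μ ≠ 0) (hF : ∫⁻ θ, F θ ∂μ ≠ ∞) :
    IsProbabilityMeasure (μ.withDensity fun θ => F θ / ∫⁻ θ', F θ' ∂μ) :=
  ⟨by rw [withDensity_div_lintegral_apply hF₀ .univ, setLIntegral_univ, ENNReal.div_self hF₀ hF]⟩

theorem setLIntegral_mixture_of_eqOn_zero {s : Set Θ} (hs : MeasurableSet s)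
    {h g f : Θ → ℝ≥0∞} {a : ℝ≥0∞} (b : ℝ≥0∞) (ha : a ≠ ∞) (hg : ∀ θ ∈ s, g θ = 0) :
    ∫⁻ θ in s, (a * h θ + b * g θ) * f θ ∂μ = a * ∫⁻ θ in s, h θ * f θ ∂μ := by
  rw [← lintegral_const_mul' _ _ ha]
  refine setLIntegral_congr_fun hs fun θ hθ => ?_
  rw [hg θ hθ, mul_zero, add_zero, mul_assoc]

end Posterior

theorem stmt_6_general {Θ : Type*} [MeasurableSpace Θ] (μ : Measure Θ)
    (Θ₀ Θ₁ : Set Θ) (hΘ₀ : MeasurableSet Θ₀) (hΘ₁ : MeasurableSet Θ₁)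
    (hdisj : Disjoint Θ₀ Θ₁) (hunion : Θ₀ ∪ Θ₁ = Set.univ)
    (π₀ π₁ : Θ → ℝ≥0∞)
    (hπ₀supp : ∀ θ ∈ Θ₁, π₀ θ = 0) (hπ₁supp : ∀ θ ∈ Θ₀, π₁ θ = 0)
    (η₁ : ℝ) (hη₁ : η₁ ∈ Set.Ioo (0 : ℝ) 1)
    (f : Θ → ℝ≥0∞)
    (π : Θ → ℝ≥0∞)
    (hπ : π = fun θ => ENNReal.ofReal (1 - η₁) * π₀ θ + ENNReal.ofReal η₁ * π₁ θ)
    (hZpos : 0 < ∫⁻ θ, π θ * f θ ∂μ) (hZfin : ∫⁻ θ, π θ * f θ ∂μ < ∞)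
    (post : Θ → ℝ≥0∞) (hpost : post = fun θ => π θ * f θ / ∫⁻ θ', π θ' * f θ' ∂μ)
    (m₀ m₁ : ℝ≥0∞) (hm₀ : m₀ = ∫⁻ θ in Θ₀, π₀ θ * f θ ∂μ)
    (hm₁ : m₁ = ∫⁻ θ in Θ₁, π₁ θ * f θ ∂μ)
    (hm₀pos : 0 < m₀) (hm₀fin : m₀ < ∞)
    (ν : Measure Θ) (hν : ν = μ.withDensity post)
    {Ω : Type*} [MeasurableSpace Ω] (P : Measure Ω) [IsProbabilityMeasure P]
    (θdraw : ℕ → Ω → Θ) (hmeas : ∀ i, Measurable (θdraw i))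
    (hindep : iIndepFun θdraw P)
    (hlaw : ∀ i, Measure.map (θdraw i) P = ν)
    (phat : ℕ → Ω → ℝ)
    (hphat : phat = fun (N : ℕ) ω => (N : ℝ)⁻¹ *
      ∑ i ∈ Finset.range N, Θ₁.indicator (fun _ => (1 : ℝ)) (θdraw i ω)) :
    ∀ᵐ ω ∂P, Tendsto
      (fun N : ℕ => ((1 - η₁) / η₁) * (phat N ω / (1 - phat N ω)))
      atTop (nhds (m₁ / m₀).toReal) := by
  obtain ⟨hη₁0, hη₁1⟩ := hη₁
  set Z := ∫⁻ θ, π θ * f θ ∂μ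
  have : IsProbabilityMeasure ν := hν ▸ hpost ▸
    isProbabilityMeasure_withDensity_div_lintegral hZpos.ne' hZfin.ne
  have hν_apply {s : Set Θ} (hs : MeasurableSet s) : ν s = (∫⁻ θ in s, π θ * f θ ∂μ) / Z := by
    rw [hν, hpost, withDensity_div_lintegral_apply hZpos.ne' hs]
  have hν₀ : ν.real Θ₀ = (1 - η₁) * m₀.toReal / Z.toReal := by
    simp only [measureReal_def, hν_apply hΘ₀, hπ]
    rw [setLIntegral_mixture_of_eqOn_zero hΘ₀ _ ofReal_ne_top hπ₁supp, ← hm₀, toReal_div,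
      toReal_mul, toReal_ofReal (by linarith)]
  have hν₁ : ν.real Θ₁ = η₁ * m₁.toReal / Z.toReal := by
    simp_rw [measureReal_def, hν_apply hΘ₁, hπ, add_comm (ENNReal.ofReal (1 - η₁) * _)]
    rw [setLIntegral_mixture_of_eqOn_zero hΘ₁ _ ofReal_ne_top hπ₀supp, ← hm₁, toReal_div,
      toReal_mul, toReal_ofReal hη₁0.le]
  have hcompl : ν.real Θ₀ = 1 - ν.real Θ₁ := by
    rw [← probReal_compl_eq_one_sub hΘ₁, ← (IsCompl.of_eq hdisj.eq_bot hunion).eq_compl]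
  have hZ : 0 < Z.toReal := toReal_pos hZpos.ne' hZfin.ne
  have hΘ₀_pos : 0 < ν.real Θ₀ := by
    rw [hν₀]
    exact div_pos (mul_pos (by linarith) (toReal_pos hm₀pos.ne' hm₀fin.ne)) hZ
  have hodds : (1 - η₁) / η₁ * (ν.real Θ₁ / (1 - ν.real Θ₁)) = (m₁ / m₀).toReal := by
    rw [← hcompl, hν₀, hν₁, toReal_div]
    field_simp
  filter_upwards [ae_tendsto_empirical_frequency hmeas (fun _ _ hij => hindep.indepFun hij)
    hlaw hΘ₁] with ω hω
  rw [← hodds, hphat]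
  exact (hω.div (tendsto_const_nhds.sub hω) (hcompl ▸ hΘ₀_pos.ne')).const_mul _

theorem stmt_6 {Θ : Type*} [MeasurableSpace Θ] (μ : Measure Θ) [SigmaFinite μ]
    (Θ₀ Θ₁ : Set Θ) (hΘ₀ : MeasurableSet Θ₀) (hΘ₁ : MeasurableSet Θ₁)
    (hdisj : Disjoint Θ₀ Θ₁) (hunion : Θ₀ ∪ Θ₁ = Set.univ)
    (π₀ π₁ : Θ → ℝ≥0∞) (hπ₀m : Measurable π₀) (hπ₁m : Measurable π₁)
    (hπ₀dens : ∫⁻ θ, π₀ θ ∂μ = 1) (hπ₁dens : ∫⁻ θ, π₁ θ ∂μ = 1)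
    (hπ₀supp : ∀ θ ∈ Θ₁, π₀ θ = 0) (hπ₁supp : ∀ θ ∈ Θ₀, π₁ θ = 0)
    (η₁ : ℝ) (hη₁ : η₁ ∈ Set.Ioo (0 : ℝ) 1)
    (f : Θ → ℝ≥0∞) (hfm : Measurable f)
    (π : Θ → ℝ≥0∞)
    (hπ : π = fun θ => ENNReal.ofReal (1 - η₁) * π₀ θ + ENNReal.ofReal η₁ * π₁ θ)
    (hZpos : 0 < ∫⁻ θ, π θ * f θ ∂μ) (hZfin : ∫⁻ θ, π θ * f θ ∂μ < ∞)
    (post : Θ → ℝ≥0∞) (hpost : post = fun θ => π θ * f θ / ∫⁻ θ', π θ' * f θ' ∂μ)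
    (m₀ m₁ : ℝ≥0∞) (hm₀ : m₀ = ∫⁻ θ in Θ₀, π₀ θ * f θ ∂μ)
    (hm₁ : m₁ = ∫⁻ θ in Θ₁, π₁ θ * f θ ∂μ)
    (hm₀pos : 0 < m₀) (hm₀fin : m₀ < ∞) (hm₁pos : 0 < m₁) (hm₁fin : m₁ < ∞)
    (ν : Measure Θ) (hν : ν = μ.withDensity post)
    {Ω : Type*} [MeasurableSpace Ω] (P : Measure Ω) [IsProbabilityMeasure P]
    (θdraw : ℕ → Ω → Θ) (hmeas : ∀ i, Measurable (θdraw i))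
    (hindep : iIndepFun θdraw P)
    (hlaw : ∀ i, Measure.map (θdraw i) P = ν)
    (phat : ℕ → Ω → ℝ)
    (hphat : phat = fun (N : ℕ) ω => (N : ℝ)⁻¹ *
      ∑ i ∈ Finset.range N, Θ₁.indicator (fun _ => (1 : ℝ)) (θdraw i ω)) :
    ∀ᵐ ω ∂P, Tendsto
      (fun N : ℕ => ((1 - η₁) / η₁) * (phat N ω / (1 - phat N ω)))
      atTop (nhds (m₁ / m₀).toReal) :=
  stmt_6_general μ Θ₀ Θ₁ hΘ₀ hΘ₁ hdisj hunion π₀ π₁ hπ₀supp hπ₁supp η₁ hη₁ f π hπ hZpos hZfin post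
    hpost m₀ m₁ hm₀ hm₁ hm₀pos hm₀fin ν hν P θdraw hmeas hindep hlaw phat hphat
end

section
/- Let f : ℝ → ℝ be a bounded continuous nonnegative function with f not identically zero on (−δ, δ), and for τ > 0 let m₁(τ) = ∫_{|θ|>δ} f(θ) · φ_τ(θ)/(2(1−Φ(δ/τ))) dθ, where φ_τ is the N(0,τ²) density and the integrand is the truncated-normal alternative prior. If f(θ) → 0 as |θ| → ∞, then m₁(τ) → 0 as τ → ∞. -/
open MeasureTheory ProbabilityTheory Filter Real

noncomputable def stdNormalCdf (x : ℝ) : ℝ := ((gaussianReal 0 1) (Set.Iic x)).toReal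

open scoped Topology NNReal

/-!
Substituting `θ = τ u` turns the numerator of `m₁ τ` into `𝔼[f (τ Z) ; |Z| > δ / τ]` with
`Z ~ N(0, 1)`, which is at most `𝔼[f (τ Z)]`; this tends to `0` by dominated convergence, since
`f (τ u) → 0` for every `u ≠ 0` and `f` is bounded. The normalising constant
`2 (1 - Φ (δ / τ))` stays above `2 (1 - Φ δ) > 0` once `τ ≥ 1`.
-/

lemma one_sub_stdNormalCdf (x : ℝ) :
    1 - stdNormalCdf x = (gaussianReal 0 1).real (Set.Ioi x) := by
  rw [stdNormalCdf, ← measureReal_def, ← Set.compl_Iic,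
    probReal_compl_eq_one_sub measurableSet_Iic]

lemma one_sub_stdNormalCdf_pos (x : ℝ) : 0 < 1 - stdNormalCdf x := by
  rw [one_sub_stdNormalCdf, measureReal_def]
  refine ENNReal.toReal_pos (fun h => ?_) (measure_ne_top _ _)
  simpa using gaussianReal_absolutelyContinuous' 0 one_ne_zero h

lemma one_sub_stdNormalCdf_antitone : Antitone fun x => 1 - stdNormalCdf x := fun _ _ hxy => by
  simp only [one_sub_stdNormalCdf]
  exact measureReal_mono (Set.Ioi_subset_Ioi hxy)

lemma tendsto_integral_comp_const_mul_atTop {E : Type*} [NormedAddCommGroup E] [NormedSpace ℝ E]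
    {μ : Measure ℝ} [IsFiniteMeasure μ] [NullSingletonClass μ] {f : ℝ → E}
    (hf : StronglyMeasurable f) {C : ℝ} (hC : ∀ x, ‖f x‖ ≤ C)
    (hf_top : Tendsto f atTop (𝓝 0)) (hf_bot : Tendsto f atBot (𝓝 0)) :
    Tendsto (fun τ => ∫ u, f (τ * u) ∂μ) atTop (𝓝 0) := by
  have hlim : ∀ u ≠ 0, Tendsto (fun τ => f (τ * u)) atTop (𝓝 0) := fun u hu => by
    rcases hu.lt_or_gt with hu | hu
    · exact hf_bot.comp (tendsto_id.atTop_mul_const_of_neg hu)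
    · exact hf_top.comp (tendsto_id.atTop_mul_const hu)
  have h := tendsto_integral_filter_of_dominated_convergence
    (F := fun τ u => f (τ * u)) (fun _ => C)
    (Eventually.of_forall fun τ =>
      (hf.comp_measurable (measurable_const_mul τ)).aestronglyMeasurable)
    (Eventually.of_forall fun τ => ae_of_all _ fun u => hC _) (integrable_const C)
    (by filter_upwards [μ.ae_ne 0] using hlim)
  rwa [integral_zero] at h

lemma setIntegral_mul_gaussianPDFReal_le {f : ℝ → ℝ} (hf : StronglyMeasurable f) {C : ℝ}
    (hC : ∀ x, ‖f x‖ ≤ C) (hf₀ : ∀ x, 0 ≤ f x) (s : Set ℝ) {τ : ℝ} (hτ : τ ≠ 0) :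
    ∫ θ in s, f θ * gaussianPDFReal 0 (.mk (τ ^ 2) (sq_nonneg τ) : ℝ≥0) θ ≤
      ∫ u, f (τ * u) ∂gaussianReal 0 1 := by
  have hv : (.mk (τ ^ 2) (sq_nonneg τ) : ℝ≥0) ≠ 0 := by
    rw [ne_eq, ← NNReal.coe_eq_zero]
    simpa using hτ
  have hmap :
      (gaussianReal 0 1).map (τ * ·) = gaussianReal 0 (.mk (τ ^ 2) (sq_nonneg τ) : ℝ≥0) := by
    simpa using gaussianReal_map_const_mul (μ := 0) (v := 1) τ
  calc ∫ θ in s, f θ * gaussianPDFReal 0 (.mk (τ ^ 2) (sq_nonneg τ) : ℝ≥0) θ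
      ≤ ∫ θ, f θ * gaussianPDFReal 0 (.mk (τ ^ 2) (sq_nonneg τ) : ℝ≥0) θ :=
        setIntegral_le_integral ((integrable_gaussianPDFReal _ _).bdd_mul
          hf.aestronglyMeasurable (ae_of_all _ hC))
          (ae_of_all _ fun θ => mul_nonneg (hf₀ θ) (gaussianPDFReal_nonneg _ _ θ))
    _ = ∫ θ, f θ ∂gaussianReal 0 (.mk (τ ^ 2) (sq_nonneg τ) : ℝ≥0) := by
        rw [integral_gaussianReal_eq_integral_smul hv]
        simp only [smul_eq_mul, mul_comm]
    _ = ∫ u, f (τ * u) ∂gaussianReal 0 1 := by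
        rw [← hmap, integral_map (measurable_const_mul τ).aemeasurable
          hf.aestronglyMeasurable]

theorem stmt_12_general (δ : ℝ) (hδ : 0 < δ)
    (f : ℝ → ℝ) (hfcont : Continuous f) (hfbdd : ∃ C, ∀ x, f x ≤ C)
    (hfnonneg : ∀ x, 0 ≤ f x)
    (hfvanish : Tendsto f atTop (nhds 0) ∧ Tendsto f atBot (nhds 0))
    (m₁ : ℝ → ℝ)
    (hm₁ : m₁ = fun τ => ∫ θ in {θ : ℝ | |θ| > δ},
      f θ * ((Real.sqrt (2 * Real.pi * τ ^ 2))⁻¹ * Real.exp (-θ ^ 2 / (2 * τ ^ 2)) /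
        (2 * (1 - stdNormalCdf (δ / τ))))) :
    Tendsto m₁ atTop (nhds 0) := by
  obtain ⟨C, hC⟩ := hfbdd
  have hC' : ∀ x, ‖f x‖ ≤ C := fun x => by rw [norm_of_nonneg (hfnonneg x)]; exact hC x
  have hf := hfcont.stronglyMeasurable
  have := nullSingletonClass_gaussianReal (μ := 0) (v := 1) one_ne_zero
  have hm₁_eq : ∀ τ, m₁ τ = (∫ θ in {θ : ℝ | |θ| > δ},
      f θ * gaussianPDFReal 0 (.mk (τ ^ 2) (sq_nonneg τ) : ℝ≥0) θ) /
        (2 * (1 - stdNormalCdf (δ / τ))) := by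
    intro τ
    rw [hm₁, ← integral_div]
    refine integral_congr_ae (ae_of_all _ fun θ => ?_)
    simp only [gaussianPDFReal, NNReal.coe_mk, sub_zero]
    ring
  have hD := one_sub_stdNormalCdf_pos δ
  have hupper := (tendsto_integral_comp_const_mul_atTop (μ := gaussianReal 0 1) hf hC'
    hfvanish.1 hfvanish.2).div_const (2 * (1 - stdNormalCdf δ))
  rw [zero_div] at hupper
  refine tendsto_of_tendsto_of_tendsto_of_le_of_le' tendsto_const_nhds hupper ?_ ?_
  · filter_upwards with τ
    rw [hm₁_eq]
    exact div_nonneg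
      (integral_nonneg fun θ => mul_nonneg (hfnonneg θ) (gaussianPDFReal_nonneg _ _ θ))
      (by linarith [one_sub_stdNormalCdf_pos (δ / τ)])
  · filter_upwards [eventually_ge_atTop 1] with τ hτ
    rw [hm₁_eq]
    refine div_le_div₀ (integral_nonneg fun u => hfnonneg _)
      (setIntegral_mul_gaussianPDFReal_le hf hC' hfnonneg _ (by positivity)) (by linarith) ?_
    linarith [one_sub_stdNormalCdf_antitone (div_le_self hδ.le hτ)]

theorem stmt_12 (δ : ℝ) (hδ : 0 < δ)
    (f : ℝ → ℝ) (hfcont : Continuous f) (hfbdd : ∃ C, ∀ x, f x ≤ C)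
    (hfnonneg : ∀ x, 0 ≤ f x)
    (hfnontriv : ∃ θ ∈ Set.Ioo (-δ) δ, f θ ≠ 0)
    (hfvanish : Tendsto f atTop (nhds 0) ∧ Tendsto f atBot (nhds 0))
    (m₁ : ℝ → ℝ)
    (hm₁ : m₁ = fun τ => ∫ θ in {θ : ℝ | |θ| > δ},
      f θ * ((Real.sqrt (2 * Real.pi * τ ^ 2))⁻¹ * Real.exp (-θ ^ 2 / (2 * τ ^ 2)) /
        (2 * (1 - stdNormalCdf (δ / τ))))) :
    Tendsto m₁ atTop (nhds 0) :=
  stmt_12_general δ hδ f hfcont hfbdd hfnonneg hfvanish m₁ hm₁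
end
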